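/- arXiv:2001.07007 — 7 statements merged into one kernel-verified Lean document; each statement's English description precedes it below -/
import Mathlib

section
/- Let X be a real separated locally convex space, f ∈ Γ(X), x₀ ∈ dom f, u ∈ X and u* ∈ X*. Then f_∞(u) = ⟨u, u*⟩ and f_∞(−u) = −⟨u, u*⟩ hold simultaneously if and only if f(x₀ + t·u) − f(x₀) − t⟨u, u*⟩ = 0 for every t ∈ ℝ. -/
open Filter Topology Set Pointwise TopologicalSpace

noncomputable section

section Defs

variable {E : Type*} [AddCommGroup E] [Module ℝ E]

/-- Recession function of `f` based at `x₀ ∈ dom f`, as the supremum of the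
(nondecreasing) difference quotients `(f (x₀ + t • u) - f x₀) / t`, `t > 0`. -/
def recAt (f : E → EReal) (x₀ u : E) : EReal :=
  ⨆ t ∈ Set.Ioi (0 : ℝ), ((t⁻¹ : ℝ) : EReal) * (f (x₀ + t • u) - f x₀)

/-- Sublinear function: positively homogeneous and subadditive. -/
def SublinearFn (g : E → EReal) : Prop :=
  g 0 = 0 ∧ (∀ x : E, ∀ t : ℝ, 0 < t → g (t • x) = (t : EReal) * g x) ∧
    ∀ x y : E, g (x + y) ≤ g x + g y

variable [TopologicalSpace E]

/-- `Γ(E)`: proper lower semicontinuous convex functions. -/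
def GammaFn (f : E → EReal) : Prop :=
  (∃ x, f x ≠ ⊤) ∧ (∀ x, f x ≠ ⊥) ∧
    Convex ℝ {p : E × ℝ | f p.1 ≤ (p.2 : EReal)} ∧ LowerSemicontinuous f

/-- Subdifferential at `0`, as a subset of the weak* dual. -/
def subdiff0 (g : E → EReal) : Set (WeakDual ℝ E) :=
  {xs | ∀ x, (xs x : EReal) ≤ g x}

/-- Fenchel conjugate. -/
def conjFn (f : E → EReal) (xs : WeakDual ℝ E) : EReal :=
  ⨆ x, ((xs x : EReal) - f x)

/-- Domain of the conjugate. -/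
def domConj (f : E → EReal) : Set (WeakDual ℝ E) := {xs | conjFn f xs ≠ ⊤}

/-- `xs ∈ ∂f(x)`. -/
def inSubdiff (f : E → EReal) (xs : WeakDual ℝ E) (x : E) : Prop :=
  f x ≠ ⊤ ∧ f x ≠ ⊥ ∧ ∀ x' : E, ((xs x' - xs x : ℝ) : EReal) + f x ≤ f x'

/-- Directionally coercive function. -/
def DirCoercive (f : E → EReal) : Prop :=
  ∀ x : E, ∀ u : E, u ≠ 0 → Filter.Tendsto (fun t : ℝ => f (x + t • u)) Filter.atTop (nhds ⊤)

/-- The set `L_{x*} = {x | g(x) = ⟨x, x*⟩ and g(-x) = -⟨x, x*⟩}`. -/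
def LxSet (g : E → EReal) (xs : WeakDual ℝ E) : Set E :=
  {x | g x = (xs x : EReal) ∧ g (-x) = ((-(xs x) : ℝ) : EReal)}

end Defs

section QRI

variable {F : Type*} [AddCommGroup F] [Module ℝ F] [TopologicalSpace F]

/-- The cone `ℝ₊ (A - a)`. -/
def coneGen (A : Set F) (a : F) : Set F :=
  {x | ∃ t : ℝ, 0 ≤ t ∧ ∃ b ∈ A, x = t • (b - a)}

/-- Quasi-relative interior. -/
def qri (A : Set F) : Set F :=
  {a ∈ A | ∃ S : Submodule ℝ F, closure (coneGen A a) = (S : Set F)}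

/-- Quasi-interior. -/
def qi (A : Set F) : Set F :=
  {a ∈ A | closure (coneGen A a) = Set.univ}

/-- Algebraic core of a set. -/
def coreSet (A : Set F) : Set F :=
  {a : F | ∀ u : F, ∃ δ : ℝ, 0 < δ ∧ ∀ t ∈ Set.Icc (0 : ℝ) δ, a + t • u ∈ A}

end QRI

/-!
Put `v = ⟨u, u*⟩` and `a = f x₀`. As `f_∞` is the supremum of the difference quotients,
`f_∞(u) ≤ v` and `f_∞(-u) ≤ -v` say exactly that the convex function `φ(t) = f(x₀ + t u)` lies
below the affine function `a + t v` on the whole line. Since `φ(0) = a`, convexity gives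
`a ≤ (φ(t) + φ(-t)) / 2 ≤ a`, forcing `φ(t) = a + t v`. Conversely, if `φ` is this affine
function, all difference quotients equal `v`.
-/

section Recession

variable {E : Type*} [AddCommGroup E] [Module ℝ E] {f : E → EReal} {x₀ : E} {a : ℝ}

lemma coe_inv_mul_sub_le_coe_iff {s : ℝ} (hs : 0 < s) (a v : ℝ) (b : EReal) :
    ((s⁻¹ : ℝ) : EReal) * (b - a) ≤ v ↔ b ≤ ((a + s * v : ℝ) : EReal) := by
  induction b using EReal.rec with
  | bot => simp [EReal.coe_mul_bot_of_pos (inv_pos.2 hs)]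
  | top => simp [EReal.coe_mul_top_of_pos (inv_pos.2 hs), -EReal.coe_add, -EReal.coe_mul]
  | coe b =>
    rw [← EReal.coe_sub, ← EReal.coe_mul, EReal.coe_le_coe_iff, EReal.coe_le_coe_iff,
      inv_mul_le_iff₀ hs]
    constructor <;> intro h <;> linarith

lemma recAt_le_iff (ha : f x₀ = a) (u : E) (v : ℝ) :
    recAt f x₀ u ≤ v ↔ ∀ t > 0, f (x₀ + t • u) ≤ ((a + t * v : ℝ) : EReal) := by
  simp only [recAt, iSup₂_le_iff, Set.mem_Ioi, ha]
  exact forall₂_congr fun t ht => coe_inv_mul_sub_le_coe_iff ht a v _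

lemma sub_le_recAt (f : E → EReal) (x₀ u : E) : f (x₀ + u) - f x₀ ≤ recAt f x₀ u := by
  refine le_iSup₂_of_le (1 : ℝ) (Set.mem_Ioi.2 one_pos) ?_
  simp

lemma recAt_le_and_recAt_neg_le_iff (ha : f x₀ = a) (u : E) (v : ℝ) :
    (recAt f x₀ u ≤ v ∧ recAt f x₀ (-u) ≤ ((-v : ℝ) : EReal)) ↔
      ∀ t : ℝ, f (x₀ + t • u) ≤ ((a + t * v : ℝ) : EReal) := by
  rw [recAt_le_iff ha, recAt_le_iff ha]
  constructor
  · rintro ⟨hpos, hneg⟩ t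
    rcases lt_trichotomy t 0 with ht | rfl | ht
    · simpa [smul_neg, neg_smul] using hneg (-t) (neg_pos.2 ht)
    · simp [ha]
    · exact hpos t ht
  · intro h
    refine ⟨fun t _ => h t, fun t _ => ?_⟩
    simpa [smul_neg, neg_smul] using h (-t)

end Recession

section ConvexEpigraph

variable {E : Type*} [AddCommGroup E] [Module ℝ E] {f : E → EReal}

lemma apply_smul_add_smul_le_of_convex_epigraph
    (hconv : Convex ℝ {p : E × ℝ | f p.1 ≤ (p.2 : EReal)}) {x y : E} {α β : ℝ}
    (hx : f x ≤ α) (hy : f y ≤ β) {s t : ℝ} (hs : 0 ≤ s) (ht : 0 ≤ t) (hst : s + t = 1) :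
    f (s • x + t • y) ≤ ((s * α + t * β : ℝ) : EReal) := by
  simpa using hconv (x := (x, α)) (y := (y, β)) hx hy hs ht hst

lemma eq_affine_of_le_affine_of_convex_epigraph
    (hconv : Convex ℝ {p : E × ℝ | f p.1 ≤ (p.2 : EReal)}) {x₀ u : E} {a c t : ℝ}
    (ha : f x₀ = a) (hbot : f (x₀ + t • u) ≠ ⊥)
    (hpos : f (x₀ + t • u) ≤ ((a + t * c : ℝ) : EReal))
    (hneg : f (x₀ + (-t) • u) ≤ ((a + -t * c : ℝ) : EReal)) :
    f (x₀ + t • u) = ((a + t * c : ℝ) : EReal) := by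
  have htop : f (x₀ + t • u) ≠ ⊤ := ne_top_of_le_ne_top (EReal.coe_ne_top _) hpos
  obtain ⟨b, hb⟩ : ∃ b : ℝ, f (x₀ + t • u) = b := ⟨_, (EReal.coe_toReal htop hbot).symm⟩
  have hmid := apply_smul_add_smul_le_of_convex_epigraph hconv (le_of_eq hb) hneg
    (s := 1 / 2) (t := 1 / 2) (by norm_num) (by norm_num) (by norm_num)
  have hx₀ : (1 / 2 : ℝ) • (x₀ + t • u) + (1 / 2 : ℝ) • (x₀ + (-t) • u) = x₀ := by module
  rw [hx₀, ha, EReal.coe_le_coe_iff] at hmid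
  rw [hb, EReal.coe_le_coe_iff] at hpos
  rw [hb]
  exact congrArg _ (by linarith)

end ConvexEpigraph

variable {X : Type*}

theorem stmt1_general [AddCommGroup X] [Module ℝ X] [TopologicalSpace X]
    (f : X → EReal) (hf : GammaFn f) (x₀ : X) (hx₀ : f x₀ ≠ ⊤)
    (u : X) (us : WeakDual ℝ X) :
    (recAt f x₀ u = (us u : EReal) ∧ recAt f x₀ (-u) = ((-(us u) : ℝ) : EReal)) ↔
      ∀ t : ℝ, f (x₀ + t • u) = f x₀ + ((t * us u : ℝ) : EReal) := by
  obtain ⟨-, hbot, hconv, -⟩ := hf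
  obtain ⟨a, ha⟩ : ∃ a : ℝ, f x₀ = a := ⟨_, (EReal.coe_toReal hx₀ (hbot x₀)).symm⟩
  simp_rw [ha, ← EReal.coe_add]
  constructor
  · rintro ⟨hpos, hneg⟩ t
    have hle := (recAt_le_and_recAt_neg_le_iff ha u (us u)).1 ⟨hpos.le, hneg.le⟩
    exact eq_affine_of_le_affine_of_convex_epigraph hconv ha (hbot _) (hle t) (hle (-t))
  · intro h
    obtain ⟨hpos, hneg⟩ := (recAt_le_and_recAt_neg_le_iff ha u (us u)).2 fun t => (h t).le
    have hone : f (x₀ + u) = ((a + us u : ℝ) : EReal) := by simpa using h 1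
    have hneg_one : f (x₀ + -u) = ((a + -us u : ℝ) : EReal) := by simpa using h (-1)
    refine ⟨le_antisymm hpos ?_, le_antisymm hneg ?_⟩
    · calc (us u : EReal) = f (x₀ + u) - f x₀ := by
            rw [hone, ha, ← EReal.coe_sub, add_sub_cancel_left]
        _ ≤ recAt f x₀ u := sub_le_recAt f x₀ u
    · calc ((-us u : ℝ) : EReal) = f (x₀ + -u) - f x₀ := by
            rw [hneg_one, ha, ← EReal.coe_sub, add_sub_cancel_left]
        _ ≤ recAt f x₀ (-u) := sub_le_recAt f x₀ (-u)

theorem stmt1 [AddCommGroup X] [Module ℝ X] [TopologicalSpace X] [IsTopologicalAddGroup X]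
    [ContinuousSMul ℝ X] [LocallyConvexSpace ℝ X] [T2Space X]
    (f : X → EReal) (hf : GammaFn f) (x₀ : X) (hx₀ : f x₀ ≠ ⊤)
    (u : X) (us : WeakDual ℝ X) :
    (recAt f x₀ u = (us u : EReal) ∧ recAt f x₀ (-u) = ((-(us u) : ℝ) : EReal)) ↔
      ∀ t : ℝ, f (x₀ + t • u) = f x₀ + ((t * us u : ℝ) : EReal) :=
  stmt1_general f hf x₀ hx₀ u us
end
end

section
/- Let X be a real separated locally convex space and f ∈ Γ(X). Then: (a) f is directionally coercive if and only if {u ∈ X : f_∞(u) ≤ 0} = {0}; (b) f is essentially directionally coercive if and only if there exists x* ∈ X* such that {u ∈ X : f_∞(u) ≤ ⟨u, x*⟩} = {0}. -/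
open Filter Topology Set Pointwise TopologicalSpace

noncomputable section

/-!
`recAt f z₀ u ≤ 0` says that `f` does not increase along the ray from `z₀` in direction `u`, so a
nonzero such `u` gives a ray on which `f` stays bounded. Conversely, if `f ≤ M` at points
`x + t • u` for arbitrarily large `t`, the chords from `(z₀, f z₀)` to `(x + t • u, M)` flatten
out towards the horizontal ray over `z₀ + ℝ₊ u`, and lower semicontinuity then forces
`f (z₀ + s • u) ≤ f z₀` for every `s > 0`. Part (b) is part (a) for `f - x*`, which is again
convex and lower semicontinuous and whose difference quotients are those of `f` minus `⟨u, x*⟩`.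
-/

theorem EReal.inv_mul_sub_coe_le_coe_iff {t : ℝ} (ht : 0 < t) (A : EReal) (r b : ℝ) :
    ((t⁻¹ : ℝ) : EReal) * (A - r) ≤ b ↔ A ≤ ((r + t * b : ℝ) : EReal) := by
  induction A with
  | bot => simp [EReal.mul_bot_of_pos (EReal.coe_pos.2 (inv_pos.2 ht))]
  | coe a =>
    rw [← EReal.coe_sub, ← EReal.coe_mul, EReal.coe_le_coe_iff, EReal.coe_le_coe_iff,
      inv_mul_le_iff₀ ht]
    constructor <;> intro h <;> linarith
  | top =>
    rw [EReal.top_sub_coe, EReal.mul_top_of_pos (EReal.coe_pos.2 (inv_pos.2 ht))]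
    simp only [top_le_iff, EReal.coe_ne_top]

section Recession

variable {E : Type*} [AddCommGroup E] [Module ℝ E]

theorem recAt_le_coe_iff {f : E → EReal} {z₀ : E} {r : ℝ} (hr : f z₀ = r) (u : E) (b : ℝ) :
    recAt f z₀ u ≤ b ↔ ∀ t : ℝ, 0 < t → f (z₀ + t • u) ≤ ((r + t * b : ℝ) : EReal) := by
  simp only [recAt, iSup₂_le_iff, Set.mem_Ioi, hr]
  exact forall₂_congr fun t ht => EReal.inv_mul_sub_coe_le_coe_iff ht _ r b

theorem convex_epigraph_sub_linear {f : E → EReal}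
    (hf : Convex ℝ {p : E × ℝ | f p.1 ≤ (p.2 : EReal)}) (ℓ : E →ₗ[ℝ] ℝ) :
    Convex ℝ {p : E × ℝ | f p.1 - (ℓ p.1 : EReal) ≤ (p.2 : EReal)} := by
  have hepi : {p : E × ℝ | f p.1 - (ℓ p.1 : EReal) ≤ (p.2 : EReal)} =
      ((LinearMap.fst ℝ E ℝ).prod (LinearMap.snd ℝ E ℝ + ℓ ∘ₗ LinearMap.fst ℝ E ℝ)) ⁻¹'
        {p : E × ℝ | f p.1 ≤ (p.2 : EReal)} := by
    ext p
    show f p.1 - (ℓ p.1 : EReal) ≤ p.2 ↔ f p.1 ≤ ((p.2 + ℓ p.1 : ℝ) : EReal)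
    rw [EReal.coe_add]
    exact EReal.sub_le_iff_le_add (Or.inl (EReal.coe_ne_bot _)) (Or.inl (EReal.coe_ne_top _))
  rw [hepi]
  exact hf.linear_preimage _

theorem LowerSemicontinuous.sub_coe {α : Type*} [TopologicalSpace α] {f : α → EReal}
    (hf : LowerSemicontinuous f) {ℓ : α → ℝ} (hℓ : Continuous ℓ) :
    LowerSemicontinuous fun x => f x - (ℓ x : EReal) := by
  have hneg : LowerSemicontinuous fun x => ((-ℓ x : ℝ) : EReal) :=
    (continuous_coe_real_ereal.comp hℓ.neg).lowerSemicontinuous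
  convert hf.add' hneg fun x =>
    EReal.continuousAt_add (Or.inr (EReal.coe_ne_bot _)) (Or.inr (EReal.coe_ne_top _)) using 2
  rw [EReal.coe_neg, sub_eq_add_neg]

variable [TopologicalSpace E] [ContinuousAdd E] [ContinuousSMul ℝ E]

theorem apply_add_smul_le_of_frequently_le {f : E → EReal}
    (hconv : Convex ℝ {p : E × ℝ | f p.1 ≤ (p.2 : EReal)}) (hlsc : LowerSemicontinuous f)
    {z₀ : E} {r : ℝ} (hr : f z₀ = r) {x u : E} {M : ℝ}
    (hM : ∃ᶠ t : ℝ in atTop, f (x + t • u) ≤ M) {s : ℝ} (hs : 0 < s) :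
    f (z₀ + s • u) ≤ r := by
  by_contra! hlt
  obtain ⟨c, hrc, hc⟩ := EReal.exists_between_coe_real hlt
  have hrc : r < c := EReal.coe_lt_coe_iff.1 hrc
  have hq : Tendsto (fun t : ℝ => s / t) atTop (𝓝 0) := tendsto_const_nhds.div_atTop tendsto_id
  -- the chord from `(z₀, r)` to `(x + t • u, M)` passes over `z₀ + s • u + (s / t) • (x - z₀)`
  have hnear : ∀ᶠ t in atTop, (c : EReal) < f (z₀ + s • u + (s / t) • (x - z₀)) := by
    have hpt : Tendsto (fun t : ℝ => z₀ + s • u + (s / t) • (x - z₀)) atTop (𝓝 (z₀ + s • u)) := by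
      simpa using tendsto_const_nhds.add (hq.smul_const (x - z₀))
    exact hpt.eventually (hlsc _ _ hc)
  have hval : ∀ᶠ t in atTop, (1 - s / t) * r + s / t * M < c := by
    have hlim : Tendsto (fun t : ℝ => (1 - s / t) * r + s / t * M) atTop (𝓝 r) := by
      simpa using (((tendsto_const_nhds (x := (1 : ℝ))).sub hq).mul_const r).add (hq.mul_const M)
    exact hlim.eventually_lt_const hrc
  obtain ⟨t, hMt, hnear_t, hval_t, hst⟩ :=
    (hM.and_eventually (hnear.and (hval.and (eventually_gt_atTop s)))).exists
  have ht : 0 < t := hs.trans hst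
  have hq₀ : 0 ≤ s / t := (div_pos hs ht).le
  have hq₁ : 0 ≤ 1 - s / t := sub_nonneg.2 ((div_le_one ht).2 hst.le)
  have hchord := hconv (show (z₀, r) ∈ {p : E × ℝ | f p.1 ≤ (p.2 : EReal)} from hr.le)
    (show (x + t • u, M) ∈ {p : E × ℝ | f p.1 ≤ (p.2 : EReal)} from hMt) hq₁ hq₀ (by ring)
  have hpt : (1 - s / t) • z₀ + (s / t) • (x + t • u) = z₀ + s • u + (s / t) • (x - z₀) := by
    rw [smul_add, smul_smul, div_mul_cancel₀ s ht.ne', sub_smul, one_smul, smul_sub]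
    abel
  simp only [Set.mem_ofPred_eq, Prod.smul_mk, Prod.mk_add_mk, smul_eq_mul, hpt] at hchord
  exact (hchord.trans (EReal.coe_le_coe_iff.2 hval_t.le)).not_gt hnear_t

theorem dirCoercive_iff_recAt_nonpos_eq_zero {f : E → EReal}
    (hconv : Convex ℝ {p : E × ℝ | f p.1 ≤ (p.2 : EReal)}) (hlsc : LowerSemicontinuous f)
    {z₀ : E} {r : ℝ} (hr : f z₀ = r) :
    DirCoercive f ↔ {u : E | recAt f z₀ u ≤ 0} = {0} := by
  have hrec (u : E) : recAt f z₀ u ≤ 0 ↔ ∀ t : ℝ, 0 < t → f (z₀ + t • u) ≤ r := by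
    simpa using recAt_le_coe_iff hr u 0
  rw [Set.eq_singleton_iff_unique_mem]
  simp only [Set.mem_ofPred_eq, hrec, smul_zero, add_zero, hr, le_refl, implies_true, true_and]
  constructor
  · intro hcoercive u hu
    by_contra hu0
    obtain ⟨t, hrt, ht⟩ := ((EReal.tendsto_nhds_top_iff_real.1 (hcoercive z₀ u hu0) r).and
      (eventually_gt_atTop 0)).exists
    exact (hu t ht).not_gt hrt
  · intro hzero x u hu0
    refine EReal.tendsto_nhds_top_iff_real.2 fun M => ?_
    by_contra hM
    simp only [not_eventually, not_lt] at hM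
    exact hu0 (hzero u fun s hs => apply_add_smul_le_of_frequently_le hconv hlsc hr hM hs)

theorem dirCoercive_sub_iff_recAt_le_eq_zero {f : E → EReal}
    (hconv : Convex ℝ {p : E × ℝ | f p.1 ≤ (p.2 : EReal)}) (hlsc : LowerSemicontinuous f)
    {z₀ : E} {r : ℝ} (hr : f z₀ = r) (xs : WeakDual ℝ E) :
    DirCoercive (fun x => f x - (xs x : EReal)) ↔
      {u : E | recAt f z₀ u ≤ (xs u : EReal)} = {0} := by
  have hr' : f z₀ - (xs z₀ : EReal) = ((r - xs z₀ : ℝ) : EReal) := by rw [hr, EReal.coe_sub]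
  have hset : {u : E | recAt (fun x => f x - (xs x : EReal)) z₀ u ≤ 0} =
      {u : E | recAt f z₀ u ≤ (xs u : EReal)} := by
    ext u
    rw [Set.mem_ofPred_eq, Set.mem_ofPred_eq, ← EReal.coe_zero,
      recAt_le_coe_iff (f := fun x => f x - (xs x : EReal)) hr' u 0, recAt_le_coe_iff hr u (xs u)]
    refine forall₂_congr fun t ht => ?_
    rw [EReal.sub_le_iff_le_add (Or.inl (EReal.coe_ne_bot _)) (Or.inl (EReal.coe_ne_top _)),
      ← EReal.coe_add, map_add, map_smul, smul_eq_mul]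
    congr! 2
    ring
  rw [← hset]
  exact dirCoercive_iff_recAt_nonpos_eq_zero
    (convex_epigraph_sub_linear hconv (xs : E →L[ℝ] ℝ).toLinearMap)
    (hlsc.sub_coe xs.continuous) hr'

end Recession

variable {X : Type*}

theorem stmt2_general [AddCommGroup X] [Module ℝ X] [TopologicalSpace X] [IsTopologicalAddGroup X]
    [ContinuousSMul ℝ X]
    (f : X → EReal) (hf : GammaFn f) (z₀ : X) (hz₀ : f z₀ ≠ ⊤) :
    (DirCoercive f ↔ {u : X | recAt f z₀ u ≤ 0} = {0}) ∧
    ((∃ xs : WeakDual ℝ X, DirCoercive (fun x => f x - (xs x : EReal))) ↔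
      ∃ xs : WeakDual ℝ X, {u : X | recAt f z₀ u ≤ (xs u : EReal)} = {0}) := by
  obtain ⟨-, hbot, hconv, hlsc⟩ := hf
  obtain ⟨r, hr⟩ : ∃ r : ℝ, f z₀ = r := ⟨_, (EReal.coe_toReal hz₀ (hbot z₀)).symm⟩
  exact ⟨dirCoercive_iff_recAt_nonpos_eq_zero hconv hlsc hr,
    exists_congr (dirCoercive_sub_iff_recAt_le_eq_zero hconv hlsc hr)⟩

theorem stmt2 [AddCommGroup X] [Module ℝ X] [TopologicalSpace X] [IsTopologicalAddGroup X]
    [ContinuousSMul ℝ X] [LocallyConvexSpace ℝ X] [T2Space X]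
    (f : X → EReal) (hf : GammaFn f) (z₀ : X) (hz₀ : f z₀ ≠ ⊤) :
    (DirCoercive f ↔ {u : X | recAt f z₀ u ≤ 0} = {0}) ∧
    ((∃ xs : WeakDual ℝ X, DirCoercive (fun x => f x - (xs x : EReal))) ↔
      ∃ xs : WeakDual ℝ X, {u : X | recAt f z₀ u ≤ (xs u : EReal)} = {0}) :=
  stmt2_general f hf z₀ hz₀
end
end

section
/- Let X be a real separated locally convex space and let g : X → ℝ ∪ {+∞} be a proper lower semicontinuous sublinear function. Set K := {x ∈ X : g(x) ≤ 0} and L := K ∩ (−K). Then K is a closed convex cone and L is a closed linear subspace of X. Moreover, L = {x ∈ X : g(x) = g(−x) = 0} = [∂g(0)]^⊥, and g(x + u) = g(x) for all x ∈ X and all u ∈ L. -/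
open Filter Topology Set Pointwise TopologicalSpace

noncomputable section

/-!
The epigraph of `g` is a closed convex cone in `X × ℝ` and `K` is its slice at height `0`, so `K`
is a closed convex cone and `L = K ∩ -K` is its lineality space. Subadditivity gives
`0 = g 0 ≤ g x + g (-x)`, which forces `g = 0` on `L`, and `g (x + u) ≤ g x + g u`,
`g x ≤ g (x + u) + g (-u)` give the invariance under `L`.

For `L = (∂g(0))^⊥`, Farkas' lemma separates `(x, 0)` from the epigraph whenever `g x > 0`.
A non-vertical separating hyperplane is, after normalisation, a subgradient positive at `x`; a
vertical one is nonpositive on `dom g`, and adding a large multiple of it to any subgradient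
(which exists by separating `(0, -1)`) gives one positive at `x`.
-/

lemma EReal.coe_inv_mul_le_of_forall_le_mul {a : EReal} {b c : ℝ} (hc : 0 < c)
    (H : ∀ s : ℝ, a ≤ s → b ≤ c * s) : ((c⁻¹ * b : ℝ) : EReal) ≤ a :=
  EReal.le_of_forall_lt_iff_le.1 fun s hs ↦
    EReal.coe_le_coe_iff.2 <| (inv_mul_le_iff₀ hc).2 (H s hs.le)

namespace SublinearFn

section Algebraic

variable {E : Type*} [AddCommGroup E] [Module ℝ E] {g : E → EReal}

def epigraphCone (hg : SublinearFn g) : PointedCone ℝ (E × ℝ) where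
  carrier := {p | g p.1 ≤ p.2}
  zero_mem' := by simp [hg.1]
  add_mem' {p q} hp hq :=
    calc g (p.1 + q.1) ≤ g p.1 + g q.1 := hg.2.2 _ _
      _ ≤ p.2 + q.2 := add_le_add hp hq
  smul_mem' := by
    rintro ⟨c, hc⟩ p (hp : g p.1 ≤ p.2)
    change g (c • p.1) ≤ ((c * p.2 : ℝ) : EReal)
    rcases hc.eq_or_lt with rfl | hc
    · simp [hg.1]
    · rw [hg.2.1 _ c hc, EReal.coe_mul]
      exact mul_le_mul_of_nonneg_left hp (EReal.coe_nonneg.2 hc.le)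

def sublevelCone (hg : SublinearFn g) : PointedCone ℝ E :=
  hg.epigraphCone.comap (LinearMap.inl ℝ E ℝ)

lemma zero_le_add_neg (hg : SublinearFn g) (x : E) : 0 ≤ g x + g (-x) := by
  simpa [hg.1] using hg.2.2 x (-x)

lemma eq_zero_of_nonpos_of_neg_nonpos (hg : SublinearFn g) {x : E} (hx : g x ≤ 0)
    (hnx : g (-x) ≤ 0) : g x = 0 :=
  le_antisymm hx <|
    calc 0 ≤ g x + g (-x) := hg.zero_le_add_neg x
      _ ≤ g x + 0 := add_le_add_right hnx _
      _ = g x := add_zero _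

lemma sublevel_inter_neg_eq (hg : SublinearFn g) :
    {x | g x ≤ 0} ∩ -{x | g x ≤ 0} = {x | g x = 0 ∧ g (-x) = 0} := by
  ext x
  refine ⟨fun ⟨hx, hnx⟩ ↦ ⟨hg.eq_zero_of_nonpos_of_neg_nonpos hx hnx, ?_⟩,
    fun ⟨hx, hnx⟩ ↦ ⟨hx.le, hnx.le⟩⟩
  rw [← neg_neg x] at hx
  exact hg.eq_zero_of_nonpos_of_neg_nonpos hnx hx

lemma map_add_of_nonpos_of_neg_nonpos (hg : SublinearFn g) {u : E} (hu : g u ≤ 0)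
    (hnu : g (-u) ≤ 0) (x : E) : g (x + u) = g x := by
  refine le_antisymm ?_ ?_
  · calc g (x + u) ≤ g x + g u := hg.2.2 x u
      _ ≤ g x + 0 := add_le_add_right hu _
      _ = g x := add_zero _
  · calc g x = g (x + u + -u) := by rw [add_neg_cancel_right]
      _ ≤ g (x + u) + g (-u) := hg.2.2 _ _
      _ ≤ g (x + u) + 0 := add_le_add_right hnu _
      _ = g (x + u) := add_zero _

end Algebraic

section Topological

variable {E : Type*} [AddCommGroup E] [Module ℝ E] [TopologicalSpace E] {g : E → EReal}

lemma isClosed_epigraphCone (hg : SublinearFn g) (hlsc : LowerSemicontinuous g) :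
    IsClosed (hg.epigraphCone : Set (E × ℝ)) :=
  hlsc.isClosed_epigraph.preimage (continuous_id.prodMap continuous_coe_real_ereal)

variable [IsTopologicalAddGroup E] [ContinuousSMul ℝ E] [LocallyConvexSpace ℝ E]

lemma exists_le_mul_of_lt (hg : SublinearFn g) (hlsc : LowerSemicontinuous g) {x : E} {r : ℝ}
    (hr : (r : EReal) < g x) :
    ∃ (φ : StrongDual ℝ E) (c : ℝ), (∀ y (s : ℝ), g y ≤ s → φ y ≤ c * s) ∧ c * r < φ x := by
  let C : ProperCone ℝ (E × ℝ) := ⟨hg.epigraphCone, hg.isClosed_epigraphCone hlsc⟩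
  obtain ⟨f, hfC, hfx⟩ := C.hyperplane_separation_point (x₀ := (x, r)) hr.not_ge
  have hf : ∀ y s, f (y, s) = f (y, 0) + s * f (0, 1) := fun y s ↦ by
    rw [← smul_eq_mul, ← map_smul, ← map_add, Prod.smul_mk, smul_zero, smul_eq_mul, mul_one,
      Prod.mk_add_mk, add_zero, zero_add]
  refine ⟨-(f.comp (.inl ℝ E ℝ)), f (0, 1), fun y s hys ↦ ?_, ?_⟩ <;>
    simp only [neg_apply, ContinuousLinearMap.comp_apply, ContinuousLinearMap.inl_apply]
  · linarith [hf y s ▸ hfC (y, s) hys]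
  · linarith [hf x r ▸ hfx]

lemma subdiff0_nonempty (hg : SublinearFn g) (hlsc : LowerSemicontinuous g) :
    (subdiff0 g).Nonempty := by
  obtain ⟨φ, c, H, hc⟩ := hg.exists_le_mul_of_lt hlsc (x := 0) (r := -1) (by simp [hg.1])
  have hc : 0 < c := by simpa using hc
  exact ⟨StrongDual.toWeakDual (c⁻¹ • φ), fun y ↦ EReal.coe_inv_mul_le_of_forall_le_mul hc (H y)⟩

lemma exists_mem_subdiff0_pos (hg : SublinearFn g) (hlsc : LowerSemicontinuous g) {x : E}
    (hx : 0 < g x) : ∃ xs ∈ subdiff0 g, 0 < xs x := by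
  obtain ⟨φ, c, H, hcx⟩ := hg.exists_le_mul_of_lt hlsc (r := 0) hx
  rw [mul_zero] at hcx
  have hc : 0 ≤ c := by simpa [hg.1] using H 0 1
  rcases hc.eq_or_lt with rfl | hc
  · have hφ : ∀ y, g y ≠ ⊤ → φ y ≤ 0 := fun y hy ↦ by
      obtain ⟨s, hs, -⟩ := EReal.lt_iff_exists_real_btwn.1 (lt_top_iff_ne_top.2 hy)
      simpa using H y s hs.le
    obtain ⟨ψ, hψ⟩ := hg.subdiff0_nonempty hlsc
    set t := |ψ x| / φ x + 1
    refine ⟨StrongDual.toWeakDual (WeakDual.toStrongDual ψ + t • φ), fun y ↦ ?_, ?_⟩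
    · change ((ψ y + t * φ y : ℝ) : EReal) ≤ g y
      rcases eq_or_ne (g y) ⊤ with hy | hy
      · simp [hy]
      · have ht : 0 ≤ t := by positivity
        exact (EReal.coe_le_coe_iff.2 (by nlinarith [hφ y hy])).trans (hψ y)
    · change 0 < ψ x + t * φ x
      rw [add_mul, div_mul_cancel₀ _ hcx.ne', one_mul]
      linarith [neg_abs_le (ψ x)]
  · exact ⟨StrongDual.toWeakDual (c⁻¹ • φ), fun y ↦ EReal.coe_inv_mul_le_of_forall_le_mul hc (H y),
      mul_pos (inv_pos.2 hc) hcx⟩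

lemma nonpos_of_forall_mem_subdiff0_nonpos (hg : SublinearFn g) (hlsc : LowerSemicontinuous g)
    {x : E} (hx : ∀ xs ∈ subdiff0 g, xs x ≤ 0) : g x ≤ 0 := by
  by_contra! h
  obtain ⟨xs, hxs, hpos⟩ := hg.exists_mem_subdiff0_pos hlsc h
  exact (hx xs hxs).not_gt hpos

lemma sublevel_inter_neg_eq_perp_subdiff0 (hg : SublinearFn g) (hlsc : LowerSemicontinuous g) :
    {x | g x ≤ 0} ∩ -{x | g x ≤ 0} = {x | ∀ xs ∈ subdiff0 g, xs x = 0} := by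
  ext x
  constructor
  · rintro ⟨hx, hnx⟩ xs hxs
    have h₁ : (xs x : EReal) ≤ 0 := (hxs x).trans hx
    have h₂ : (xs (-x) : EReal) ≤ 0 := (hxs (-x)).trans hnx
    rw [map_neg] at h₂
    norm_cast at h₁ h₂
    linarith
  · intro hx
    refine ⟨hg.nonpos_of_forall_mem_subdiff0_nonpos hlsc fun xs hxs ↦ (hx xs hxs).le,
      hg.nonpos_of_forall_mem_subdiff0_nonpos hlsc fun xs hxs ↦ ?_⟩
    rw [map_neg, hx xs hxs, neg_zero]

end Topological

end SublinearFn

variable {X : Type*}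

theorem stmt3_general [AddCommGroup X] [Module ℝ X] [TopologicalSpace X] [IsTopologicalAddGroup X]
    [ContinuousSMul ℝ X] [LocallyConvexSpace ℝ X]
    (g : X → EReal) (hsub : SublinearFn g)
    (hlsc : LowerSemicontinuous g) :
    IsClosed {x : X | g x ≤ 0} ∧ Convex ℝ {x : X | g x ≤ 0} ∧
    (∀ x ∈ {x : X | g x ≤ 0}, ∀ t : ℝ, 0 ≤ t → t • x ∈ {x : X | g x ≤ 0}) ∧
    IsClosed ({x : X | g x ≤ 0} ∩ (-{x : X | g x ≤ 0})) ∧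
    (∃ S : Submodule ℝ X, {x : X | g x ≤ 0} ∩ (-{x : X | g x ≤ 0}) = (S : Set X)) ∧
    {x : X | g x ≤ 0} ∩ (-{x : X | g x ≤ 0}) = {x : X | g x = 0 ∧ g (-x) = 0} ∧
    {x : X | g x ≤ 0} ∩ (-{x : X | g x ≤ 0}) = {x : X | ∀ xs ∈ subdiff0 g, xs x = 0} ∧
    ∀ x u : X, u ∈ {x : X | g x ≤ 0} ∩ (-{x : X | g x ≤ 0}) → g (x + u) = g x := by
  have hK : IsClosed {x : X | g x ≤ 0} := hlsc.isClosed_preimage 0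
  exact ⟨hK, hsub.sublevelCone.convex, fun x hx t ht ↦ hsub.sublevelCone.smul_mem ht hx,
    hK.inter hK.neg, ⟨hsub.sublevelCone.lineal, rfl⟩, hsub.sublevel_inter_neg_eq,
    hsub.sublevel_inter_neg_eq_perp_subdiff0 hlsc,
    fun x u hu ↦ hsub.map_add_of_nonpos_of_neg_nonpos hu.1 hu.2 x⟩

theorem stmt3 [AddCommGroup X] [Module ℝ X] [TopologicalSpace X] [IsTopologicalAddGroup X]
    [ContinuousSMul ℝ X] [LocallyConvexSpace ℝ X] [T2Space X]
    (g : X → EReal) (hsub : SublinearFn g) (hproper : ∀ x, g x ≠ ⊥)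
    (hlsc : LowerSemicontinuous g) :
    IsClosed {x : X | g x ≤ 0} ∧ Convex ℝ {x : X | g x ≤ 0} ∧
    (∀ x ∈ {x : X | g x ≤ 0}, ∀ t : ℝ, 0 ≤ t → t • x ∈ {x : X | g x ≤ 0}) ∧
    IsClosed ({x : X | g x ≤ 0} ∩ (-{x : X | g x ≤ 0})) ∧
    (∃ S : Submodule ℝ X, {x : X | g x ≤ 0} ∩ (-{x : X | g x ≤ 0}) = (S : Set X)) ∧
    {x : X | g x ≤ 0} ∩ (-{x : X | g x ≤ 0}) = {x : X | g x = 0 ∧ g (-x) = 0} ∧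
    {x : X | g x ≤ 0} ∩ (-{x : X | g x ≤ 0}) = {x : X | ∀ xs ∈ subdiff0 g, xs x = 0} ∧
    ∀ x u : X, u ∈ {x : X | g x ≤ 0} ∩ (-{x : X | g x ≤ 0}) → g (x + u) = g x :=
  stmt3_general g hsub hlsc
end
end

section
/- Let X be a real separated locally convex space and let g : X → ℝ ∪ {+∞} be a proper lower semicontinuous sublinear function. If u* ∈ ∂g(0), then L_{u*} = [∂g(0) − ∂g(0)]^⊥. Consequently, L_{x*} ⊆ L_{u*} for every x* ∈ X* and every u* ∈ ∂g(0); in particular L_{u*} = L_{v*} for all u*, v* ∈ ∂g(0). -/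
open Filter Topology Set Pointwise TopologicalSpace

noncomputable section

variable {X : Type*}

/-!
The epigraph `{(x, t) | g x ≤ t}` of a lower semicontinuous sublinear `g` is a closed convex cone
in `X × ℝ`. Separating a point `(x, c)` with `c < g x` from it gives a functional that is `≤ 0` on
the cone; if it is not vertical, rescaling it yields `y* ∈ ∂g(0)` with `c < ⟨x, y*⟩`, and if it is
vertical, adding large multiples of it to any `u* ∈ ∂g(0)` does. Hence `g x` is the supremum of
`⟨x, y*⟩` over `∂g(0)`, so `g x = ⟨x, u*⟩` and `g (-x) = -⟨x, u*⟩` exactly when all elements of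
`∂g(0)` agree on `x`; conversely any `u* ∈ ∂g(0)` is squeezed on `L_{x*}` between
`⟨x, x*⟩ = g x` and `-g (-x)`.
-/

def realEpigraph {α : Type*} (g : α → EReal) : Set (α × ℝ) := {p | g p.1 ≤ p.2}

lemma LowerSemicontinuous.isClosed_realEpigraph {α : Type*} [TopologicalSpace α] {g : α → EReal}
    (hlsc : LowerSemicontinuous g) : IsClosed (realEpigraph g) :=
  hlsc.isClosed_epigraph.preimage
    (continuous_fst.prodMk (continuous_coe_real_ereal.comp continuous_snd))

lemma StrongDual.apply_nonpos_of_lt_of_smul_mem {F : Type*} [AddCommGroup F] [Module ℝ F]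
    [TopologicalSpace F] {K : Set F} (hK : ∀ p ∈ K, ∀ r : ℝ, 0 ≤ r → r • p ∈ K)
    (f : StrongDual ℝ F) {u : ℝ} (hf : ∀ p ∈ K, f p < u) {p : F} (hp : p ∈ K) : f p ≤ 0 := by
  have hu : 0 < u := by simpa using hf _ (hK p hp 0 le_rfl)
  by_contra! hpos
  have h := hf _ (hK p hp (u / f p) (div_pos hu hpos).le)
  rw [map_smul, smul_eq_mul, div_mul_cancel₀ _ hpos.ne'] at h
  exact lt_irrefl u h

section Sublinear

variable {E : Type*} [AddCommGroup E] [Module ℝ E] {g : E → EReal}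

lemma SublinearFn.add_mem_realEpigraph (hg : SublinearFn g) {p q : E × ℝ}
    (hp : p ∈ realEpigraph g) (hq : q ∈ realEpigraph g) : p + q ∈ realEpigraph g :=
  calc g (p.1 + q.1) ≤ g p.1 + g q.1 := hg.2.2 _ _
    _ ≤ (p.2 : EReal) + q.2 := add_le_add hp hq

lemma SublinearFn.smul_mem_realEpigraph (hg : SublinearFn g) {p : E × ℝ}
    (hp : p ∈ realEpigraph g) {r : ℝ} (hr : 0 ≤ r) : r • p ∈ realEpigraph g := by
  obtain ⟨hg0, hhom, -⟩ := hg
  rcases hr.eq_or_lt with rfl | hr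
  · simp [realEpigraph, hg0]
  · show g (r • p.1) ≤ ((r * p.2 : ℝ) : EReal)
    rw [hhom _ _ hr, EReal.coe_mul]
    exact mul_le_mul_of_nonneg_left hp (by exact_mod_cast hr.le)

lemma SublinearFn.convex_realEpigraph (hg : SublinearFn g) : Convex ℝ (realEpigraph g) :=
  fun _ hp _ hq _ _ ha hb _ =>
    hg.add_mem_realEpigraph (hg.smul_mem_realEpigraph hp ha) (hg.smul_mem_realEpigraph hq hb)

variable [TopologicalSpace E]

lemma mem_subdiff0_iff_forall_mem_realEpigraph {ys : WeakDual ℝ E} :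
    ys ∈ subdiff0 g ↔ ∀ p ∈ realEpigraph g, ys p.1 ≤ p.2 := by
  refine ⟨fun h p hp => EReal.coe_le_coe_iff.1 ((h p.1).trans hp), fun h x => ?_⟩
  exact EReal.le_of_forall_lt_iff_le.1 fun t ht => EReal.coe_le_coe_iff.2 (h (x, t) ht.le)

lemma toWeakDual_smul_mem_subdiff0 {φ : StrongDual ℝ E} {r : ℝ} (hr : r < 0)
    (hφ : ∀ p ∈ realEpigraph g, φ p.1 + p.2 * r ≤ 0) :
    StrongDual.toWeakDual ((-r)⁻¹ • φ) ∈ subdiff0 g := by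
  refine mem_subdiff0_iff_forall_mem_realEpigraph.2 fun p hp => ?_
  have h := hφ p hp
  show (-r)⁻¹ * φ p.1 ≤ p.2
  rw [inv_mul_le_iff₀ (neg_pos.2 hr)]
  linarith

lemma add_toWeakDual_smul_mem_subdiff0 {us : WeakDual ℝ E} (hus : us ∈ subdiff0 g)
    {φ : StrongDual ℝ E} (hφ : ∀ p ∈ realEpigraph g, φ p.1 ≤ 0) {t : ℝ} (ht : 0 ≤ t) :
    us + StrongDual.toWeakDual (t • φ) ∈ subdiff0 g := by
  rw [mem_subdiff0_iff_forall_mem_realEpigraph] at hus ⊢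
  intro p hp
  show us p.1 + t * φ p.1 ≤ p.2
  nlinarith [hus p hp, hφ p hp]

variable [IsTopologicalAddGroup E] [ContinuousSMul ℝ E] [LocallyConvexSpace ℝ E]

theorem SublinearFn.exists_mem_subdiff0_lt_apply (hg : SublinearFn g)
    (hlsc : LowerSemicontinuous g) {us : WeakDual ℝ E} (hus : us ∈ subdiff0 g) {x : E} {c : ℝ}
    (hc : (c : EReal) < g x) : ∃ ys ∈ subdiff0 g, c < ys x := by
  obtain ⟨f, u, hfK, hfx⟩ := geometric_hahn_banach_closed_point hg.convex_realEpigraph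
    hlsc.isClosed_realEpigraph (x := (x, c)) hc.not_ge
  have hf_nonpos : ∀ p ∈ realEpigraph g, f p ≤ 0 := fun p hp =>
    f.apply_nonpos_of_lt_of_smul_mem (fun _ hq _ hr => hg.smul_mem_realEpigraph hq hr) hfK hp
  have hu : 0 < u := by simpa using hfK 0 (by simp [realEpigraph, hg.1])
  set φ : StrongDual ℝ E := f.comp (.inl ℝ E ℝ)
  set r : ℝ := f (0, 1)
  have hf : ∀ p : E × ℝ, f p = φ p.1 + p.2 * r := fun p => by
    rw [← f.comp_inl_add_comp_inr p, ← smul_eq_mul, ← map_smul]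
    simp [φ]
  have hφ : ∀ p ∈ realEpigraph g, φ p.1 + p.2 * r ≤ 0 := fun p hp => hf p ▸ hf_nonpos p hp
  have hφx : 0 < φ x + c * r := by linarith [hf (x, c)]
  have hr : r ≤ 0 := hf_nonpos (0, 1) (by simp [realEpigraph, hg.1])
  rcases hr.lt_or_eq with hr | hr
  · refine ⟨_, toWeakDual_smul_mem_subdiff0 hr hφ, ?_⟩
    show c < (-r)⁻¹ * φ x
    rw [lt_inv_mul_iff₀ (neg_pos.2 hr)]
    linarith
  · simp only [hr, mul_zero, add_zero] at hφ hφx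
    obtain ⟨n, hn⟩ := exists_nat_gt ((c - us x) / φ x)
    refine ⟨_, add_toWeakDual_smul_mem_subdiff0 hus hφ n.cast_nonneg, ?_⟩
    show c < us x + n * φ x
    rw [div_lt_iff₀ hφx] at hn
    linarith

theorem SublinearFn.apply_eq_of_forall_mem_subdiff0_apply_le (hg : SublinearFn g)
    (hlsc : LowerSemicontinuous g) {us : WeakDual ℝ E} (hus : us ∈ subdiff0 g) {x : E}
    (hx : ∀ ys ∈ subdiff0 g, ys x ≤ us x) : g x = us x := by
  refine ((hus x).lt_or_eq.resolve_left fun hlt => ?_).symm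
  obtain ⟨ys, hys, hlt'⟩ := hg.exists_mem_subdiff0_lt_apply hlsc hus hlt
  exact (hx ys hys).not_gt hlt'

end Sublinear

section LxSet

variable {E : Type*} [AddCommGroup E] [Module ℝ E] [TopologicalSpace E] {g : E → EReal}
  {us xs : WeakDual ℝ E} {x : E}

lemma apply_eq_of_mem_LxSet (hus : us ∈ subdiff0 g) (hx : x ∈ LxSet g xs) : us x = xs x := by
  have h₁ : us x ≤ xs x := by exact_mod_cast hx.1 ▸ hus x
  have h₂ : us (-x) ≤ -xs x := by exact_mod_cast hx.2 ▸ hus (-x)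
  rw [map_neg] at h₂
  linarith

lemma LxSet_subset_LxSet (hus : us ∈ subdiff0 g) : LxSet g xs ⊆ LxSet g us := fun x hx => by
  rw [LxSet, mem_ofPred_eq, apply_eq_of_mem_LxSet hus hx]
  exact hx

variable [IsTopologicalAddGroup E] [ContinuousSMul ℝ E] [LocallyConvexSpace ℝ E]

theorem SublinearFn.LxSet_eq (hg : SublinearFn g) (hlsc : LowerSemicontinuous g)
    (hus : us ∈ subdiff0 g) :
    LxSet g us = {x | ∀ ys ∈ subdiff0 g, ∀ zs ∈ subdiff0 g, (ys - zs) x = 0} := by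
  ext x
  refine ⟨fun hx ys hys zs hzs => ?_, fun hx => ?_⟩
  · show ys x - zs x = 0
    rw [apply_eq_of_mem_LxSet hys hx, apply_eq_of_mem_LxSet hzs hx, sub_self]
  · have hx' : ∀ ys ∈ subdiff0 g, ys x = us x := fun ys hys => sub_eq_zero.1 (hx ys hys us hus)
    refine ⟨hg.apply_eq_of_forall_mem_subdiff0_apply_le hlsc hus fun ys hys => (hx' ys hys).le, ?_⟩
    rw [← map_neg]
    refine hg.apply_eq_of_forall_mem_subdiff0_apply_le hlsc hus fun ys hys => ?_
    rw [map_neg, map_neg, hx' ys hys]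

end LxSet

theorem stmt5_general [AddCommGroup X] [Module ℝ X] [TopologicalSpace X] [IsTopologicalAddGroup X]
    [ContinuousSMul ℝ X] [LocallyConvexSpace ℝ X]
    (g : X → EReal) (hsub : SublinearFn g)
    (hlsc : LowerSemicontinuous g) :
    (∀ us ∈ subdiff0 g,
      LxSet g us = {x : X | ∀ ys ∈ subdiff0 g, ∀ zs ∈ subdiff0 g, (ys - zs) x = 0}) ∧
    (∀ xs : WeakDual ℝ X, ∀ us ∈ subdiff0 g, LxSet g xs ⊆ LxSet g us) ∧
    (∀ us ∈ subdiff0 g, ∀ vs ∈ subdiff0 g, LxSet g us = LxSet g vs) :=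
  ⟨fun _ hus => hsub.LxSet_eq hlsc hus, fun _ _ hus => LxSet_subset_LxSet hus,
    fun _ hus _ hvs => (LxSet_subset_LxSet hvs).antisymm (LxSet_subset_LxSet hus)⟩

theorem stmt5 [AddCommGroup X] [Module ℝ X] [TopologicalSpace X] [IsTopologicalAddGroup X]
    [ContinuousSMul ℝ X] [LocallyConvexSpace ℝ X] [T2Space X]
    (g : X → EReal) (hsub : SublinearFn g) (hproper : ∀ x, g x ≠ ⊥)
    (hlsc : LowerSemicontinuous g) :
    (∀ us ∈ subdiff0 g,
      LxSet g us = {x : X | ∀ ys ∈ subdiff0 g, ∀ zs ∈ subdiff0 g, (ys - zs) x = 0}) ∧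
    (∀ xs : WeakDual ℝ X, ∀ us ∈ subdiff0 g, LxSet g xs ⊆ LxSet g us) ∧
    (∀ us ∈ subdiff0 g, ∀ vs ∈ subdiff0 g, LxSet g us = LxSet g vs) :=
  stmt5_general g hsub hlsc
end
end

section
/- Let X be a real separated locally convex space, let g : X → ℝ ∪ {+∞} be a proper lower semicontinuous sublinear function, and let x* ∈ X*. Then x* ∈ qi ∂g(0) (quasi-interior taken in X* with the weak* topology) if and only if {x ∈ X : g(x) ≤ ⟨x, x*⟩} = {0}. -/
/-!
Hahn–Banach applied to the closed convex cone `{(x, r) | g x ≤ r}` shows that a lower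
semicontinuous sublinear `g` is the support function of `∂g(0)` as soon as `∂g(0) ≠ ∅`.
Since the weak* dual of `X*` is `X`, Hahn–Banach in `X*` shows that `x*` fails to be a
quasi-interior point of the convex set `∂g(0)` exactly when some `x ≠ 0` satisfies
`⟨x, y*⟩ ≤ ⟨x, x*⟩` for all `y* ∈ ∂g(0)`, that is, `g x ≤ ⟨x, x*⟩`.
-/

open Filter Topology Set Pointwise TopologicalSpace

noncomputable section

section ConeSeparation

variable {E : Type*} [AddCommGroup E] [Module ℝ E] [TopologicalSpace E] [IsTopologicalAddGroup E]
  [ContinuousSMul ℝ E] [LocallyConvexSpace ℝ E]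

theorem exists_dual_pos_of_notMem_closure_cone {C : Set E} {x : E} (hC : Convex ℝ C)
    (h0 : (0 : E) ∈ C) (hsmul : ∀ y ∈ C, ∀ t : ℝ, 0 < t → t • y ∈ C) (hx : x ∉ closure C) :
    ∃ f : StrongDual ℝ E, (∀ y ∈ C, f y ≤ 0) ∧ 0 < f x := by
  obtain ⟨f, u, hfu, hux⟩ := geometric_hahn_banach_closed_point hC.closure isClosed_closure hx
  have hu : 0 < u := by simpa using hfu 0 (subset_closure h0)
  refine ⟨f, fun y hy => ?_, hu.trans hux⟩
  by_contra! hfy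
  have := hfu _ (subset_closure (hsmul y hy (u / f y) (div_pos hu hfy)))
  rw [map_smul, smul_eq_mul, div_mul_cancel₀ _ hfy.ne'] at this
  exact lt_irrefl _ this

end ConeSeparation

section QuasiInterior

variable {F : Type*} [AddCommGroup F] [Module ℝ F] {A : Set F} {a : F}

theorem zero_mem_coneGen (ha : a ∈ A) : (0 : F) ∈ coneGen A a :=
  ⟨0, le_rfl, a, ha, (zero_smul ℝ _).symm⟩

theorem smul_mem_coneGen {y : F} (hy : y ∈ coneGen A a) {t : ℝ} (ht : 0 ≤ t) :
    t • y ∈ coneGen A a := by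
  obtain ⟨s, hs, b, hb, rfl⟩ := hy
  exact ⟨t * s, mul_nonneg ht hs, b, hb, smul_smul t s _⟩

theorem convex_coneGen (hA : Convex ℝ A) (ha : a ∈ A) : Convex ℝ (coneGen A a) := by
  rintro _ ⟨s, hs, b, hb, rfl⟩ _ ⟨t, ht, c, hc, rfl⟩ μ ν hμ hν -
  rcases (add_nonneg (mul_nonneg hμ hs) (mul_nonneg hν ht)).eq_or_lt with hr | hr
  · obtain ⟨hμs, hνt⟩ := (add_eq_zero_iff_of_nonneg (mul_nonneg hμ hs) (mul_nonneg hν ht)).1 hr.symm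
    refine ⟨0, le_rfl, a, ha, ?_⟩
    rw [smul_smul, smul_smul, hμs, hνt]
    simp
  · have hr' := hr.ne'
    refine ⟨μ * s + ν * t, hr.le, (μ * s / (μ * s + ν * t)) • b + (ν * t / (μ * s + ν * t)) • c,
      hA hb hc (by positivity) (by positivity) (by field_simp), ?_⟩
    have hd : (μ * s + ν * t) • ((μ * s / (μ * s + ν * t)) • b + (ν * t / (μ * s + ν * t)) • c) =
        (μ * s) • b + (ν * t) • c := by
      rw [smul_add, smul_smul, smul_smul, mul_div_cancel₀ _ hr', mul_div_cancel₀ _ hr']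
    rw [smul_sub (μ * s + ν * t), hd]
    module

variable {X : Type*} [AddCommGroup X] [Module ℝ X] [TopologicalSpace X]

theorem mem_qi_of_forall_apply_le_imp_eq_zero {A : Set (WeakDual ℝ X)} {a : WeakDual ℝ X}
    (hA : Convex ℝ A) (ha : a ∈ A) (h : ∀ x : X, (∀ b ∈ A, b x ≤ a x) → x = 0) :
    a ∈ qi A := by
  have : LocallyConvexSpace ℝ (WeakDual ℝ X) := WeakBilin.locallyConvexSpace
  refine ⟨ha, Set.eq_univ_of_forall fun w => by_contra fun hw => ?_⟩
  obtain ⟨f, hf, hfw⟩ := exists_dual_pos_of_notMem_closure_cone (convex_coneGen hA ha)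
    (zero_mem_coneGen ha) (fun y hy t ht => smul_mem_coneGen hy ht.le) hw
  obtain ⟨x, rfl⟩ := LinearMap.dualEmbedding_surjective (topDualPairing ℝ X) f
  have hx : x = 0 := h x fun b hb =>
    sub_nonpos.mp (hf (b - a) ⟨1, zero_le_one, b, hb, (one_smul ℝ _).symm⟩)
  subst hx
  rw [map_zero] at hfw
  exact hfw.ne' rfl

theorem eq_zero_of_mem_qi [IsTopologicalAddGroup X] [ContinuousSMul ℝ X]
    [LocallyConvexSpace ℝ X] [T2Space X] {A : Set (WeakDual ℝ X)} {a : WeakDual ℝ X}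
    (ha : a ∈ qi A) {x : X} (hx : ∀ b ∈ A, b x ≤ a x) : x = 0 := by
  have hcone : coneGen A a ⊆ {w | w x ≤ 0} := by
    rintro _ ⟨t, ht, b, hb, rfl⟩
    exact mul_nonpos_of_nonneg_of_nonpos ht (sub_nonpos.2 (hx b hb))
  have hle (w : WeakDual ℝ X) : w x ≤ 0 :=
    closure_minimal hcone (isClosed_le (WeakDual.eval_continuous x) continuous_const)
      (ha.2 ▸ mem_univ w)
  refine SeparatingDual.eq_zero_of_forall_dual_eq_zero (R := ℝ) fun f => (hle f).antisymm ?_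
  exact neg_nonpos.mp (hle (-f))

end QuasiInterior

theorem LowerSemicontinuous.isClosed_real_epigraph {α : Type*} [TopologicalSpace α]
    {f : α → EReal} (hf : LowerSemicontinuous f) : IsClosed {p : α × ℝ | f p.1 ≤ p.2} :=
  hf.isClosed_epigraph.preimage
    (continuous_fst.prodMk (continuous_coe_real_ereal.comp continuous_snd))

section Sublinear

variable {X : Type*} [AddCommGroup X] [Module ℝ X] {g : X → EReal}

theorem SublinearFn.smul_mem_epigraph (hg : SublinearFn g) {p : X × ℝ} (hp : g p.1 ≤ p.2)
    {t : ℝ} (ht : 0 ≤ t) : g (t • p).1 ≤ (t • p).2 := by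
  rcases ht.eq_or_lt with rfl | ht
  · simp [hg.1]
  · rw [Prod.smul_fst, Prod.smul_snd, hg.2.1 _ _ ht, smul_eq_mul, EReal.coe_mul]
    exact mul_le_mul_of_nonneg_left hp (EReal.coe_nonneg.2 ht.le)

theorem SublinearFn.add_mem_epigraph (hg : SublinearFn g) {p q : X × ℝ} (hp : g p.1 ≤ p.2)
    (hq : g q.1 ≤ q.2) : g (p + q).1 ≤ (p + q).2 := by
  rw [Prod.fst_add, Prod.snd_add, EReal.coe_add]
  exact (hg.2.2 _ _).trans (add_le_add hp hq)

theorem SublinearFn.convex_epigraph (hg : SublinearFn g) :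
    Convex ℝ {p : X × ℝ | g p.1 ≤ p.2} := fun _ hp _ hq _ _ ha hb _ =>
  hg.add_mem_epigraph (hg.smul_mem_epigraph hp ha) (hg.smul_mem_epigraph hq hb)

variable [TopologicalSpace X]

theorem mem_subdiff0_iff_forall_le_coe {y : WeakDual ℝ X} :
    y ∈ subdiff0 g ↔ ∀ z (r : ℝ), g z ≤ r → y z ≤ r := by
  refine ⟨fun hy z r hz => EReal.coe_le_coe_iff.1 ((hy z).trans hz), fun h z => ?_⟩
  by_contra! hz
  obtain ⟨r, hzr, hry⟩ := EReal.lt_iff_exists_real_btwn.1 hz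
  exact (EReal.coe_lt_coe_iff.1 hry).not_ge (h z r hzr.le)

theorem convex_subdiff0 (g : X → EReal) : Convex ℝ (subdiff0 g) := by
  intro y hy y' hy' a b ha hb hab
  refine mem_subdiff0_iff_forall_le_coe.2 fun z r hz => ?_
  have hyz := mem_subdiff0_iff_forall_le_coe.1 hy z r hz
  have hy'z := mem_subdiff0_iff_forall_le_coe.1 hy' z r hz
  calc a * y z + b * y' z ≤ a * r + b * r :=
        add_le_add (mul_le_mul_of_nonneg_left hyz ha) (mul_le_mul_of_nonneg_left hy'z hb)
    _ = r := by rw [← add_mul, hab, one_mul]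

theorem SublinearFn.le_of_forall_mem_subdiff0_apply_le [IsTopologicalAddGroup X]
    [ContinuousSMul ℝ X] [LocallyConvexSpace ℝ X] (hg : SublinearFn g)
    (hlsc : LowerSemicontinuous g) {y₀ : WeakDual ℝ X} (hy₀ : y₀ ∈ subdiff0 g) {x : X} {c : ℝ}
    (h : ∀ y ∈ subdiff0 g, y x ≤ c) : g x ≤ c := by
  by_contra hxc
  obtain ⟨F, hF, hFx⟩ := exists_dual_pos_of_notMem_closure_cone (x := (x, c)) hg.convex_epigraph
    (by simp [hg.1]) (fun p hp t ht => hg.smul_mem_epigraph hp ht.le)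
    (by rwa [hlsc.isClosed_real_epigraph.closure_eq])
  set φ : WeakDual ℝ X := F.comp (ContinuousLinearMap.inl ℝ X ℝ)
  set s := F (0, 1)
  have hFφ (z : X) (r : ℝ) : F (z, r) = φ z + r * s := by
    calc F (z, r) = F (z, 0) + F (r • (0, 1)) := by rw [← map_add]; simp
      _ = φ z + r * s := by rw [map_smul, smul_eq_mul]; rfl
  have hs : s ≤ 0 := hF (0, 1) (by simp [hg.1])
  have hdom (z : X) (r : ℝ) (hz : g z ≤ r) : φ z + r * s ≤ 0 := hFφ z r ▸ hF (z, r) hz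
  rw [hFφ] at hFx
  rcases hs.lt_or_eq with hs | hs
  · have hy : ((-s)⁻¹ • φ : WeakDual ℝ X) ∈ subdiff0 g := by
      refine mem_subdiff0_iff_forall_le_coe.2 fun z r hz => ?_
      show (-s)⁻¹ * φ z ≤ r
      rw [inv_mul_le_iff₀ (neg_pos.2 hs)]
      linarith [hdom z r hz]
    have := h _ hy
    change (-s)⁻¹ * φ x ≤ c at this
    rw [inv_mul_le_iff₀ (neg_pos.2 hs)] at this
    linarith
  · -- `φ ≤ 0` on `dom g`, so every `y₀ + t • φ` with `t ≥ 0` stays in `∂g(0)`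
    have hy (t : ℝ) (ht : 0 ≤ t) : (y₀ + t • φ : WeakDual ℝ X) ∈ subdiff0 g := by
      refine mem_subdiff0_iff_forall_le_coe.2 fun z r hz => ?_
      show y₀ z + t * φ z ≤ r
      have hφz := hdom z r hz
      rw [hs, mul_zero, add_zero] at hφz
      linarith [mem_subdiff0_iff_forall_le_coe.1 hy₀ z r hz, mul_nonpos_of_nonneg_of_nonpos ht hφz]
    rw [hs, mul_zero, add_zero] at hFx
    have := h _ (hy ((|c - y₀ x| + 1) / φ x) (by positivity))
    change y₀ x + (|c - y₀ x| + 1) / φ x * φ x ≤ c at this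
    rw [div_mul_cancel₀ _ hFx.ne'] at this
    linarith [le_abs_self (c - y₀ x)]

end Sublinear

variable {X : Type*}

theorem stmt7_general [AddCommGroup X] [Module ℝ X] [TopologicalSpace X] [IsTopologicalAddGroup X]
    [ContinuousSMul ℝ X] [LocallyConvexSpace ℝ X] [T2Space X]
    (g : X → EReal) (hsub : SublinearFn g)
    (hlsc : LowerSemicontinuous g) (xs : WeakDual ℝ X) :
    xs ∈ qi (subdiff0 g) ↔ {x : X | g x ≤ (xs x : EReal)} = {0} := by
  have hzero : g 0 = (xs 0 : EReal) := by simp [hsub.1]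
  constructor
  · intro hqi
    refine Set.eq_singleton_iff_unique_mem.2 ⟨hzero.le, fun x hx => ?_⟩
    exact eq_zero_of_mem_qi hqi fun b hb => EReal.coe_le_coe_iff.1 ((hb x).trans hx)
  · intro hset
    have hxs : xs ∈ subdiff0 g := fun x => by
      by_cases hx : x = 0
      · exact hx ▸ hzero.ge
      · exact (not_le.1 fun hle => hx (hset.subset hle)).le
    refine mem_qi_of_forall_apply_le_imp_eq_zero (convex_subdiff0 g) hxs fun x hx => ?_
    exact hset.subset (hsub.le_of_forall_mem_subdiff0_apply_le hlsc hxs hx)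

theorem stmt7 [AddCommGroup X] [Module ℝ X] [TopologicalSpace X] [IsTopologicalAddGroup X]
    [ContinuousSMul ℝ X] [LocallyConvexSpace ℝ X] [T2Space X]
    (g : X → EReal) (hsub : SublinearFn g) (hproper : ∀ x, g x ≠ ⊥)
    (hlsc : LowerSemicontinuous g) (xs : WeakDual ℝ X) :
    xs ∈ qi (subdiff0 g) ↔ {x : X | g x ≤ (xs x : EReal)} = {0} :=
  stmt7_general g hsub hlsc xs
end
end

section
/- Let X := ℓ₂ (real square-summable sequences) with its usual norm ‖·‖₂, fix q ∈ (2, ∞), and define g : ℓ₂ → ℝ by g(x) := (Σ_{n≥1} |x_n|^q)^{1/q} = ‖x‖_q. Then g is a finite-valued continuous sublinear function satisfying g(x) ≤ ‖x‖₂ for all x and {x ∈ ℓ₂ : g(x) ≤ 0} = {0}, yet there exists no α > 0 such that g(x) ≥ α‖x‖₂ for all x ∈ ℓ₂. -/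
noncomputable section

/-- The `ℓ_q`-"norm" of an element of `ℓ₂` (finite for `q ≥ 2`). -/
def lqNorm (q : ℝ) (x : lp (fun _ : ℕ => ℝ) 2) : ℝ :=
  (∑' n : ℕ, |x n| ^ q) ^ (1 / q)

/-!
On `ℓ₂`, `lqNorm q` is the norm of the inclusion `ℓ₂ → ℓ_q`, a linear injection of norm at most
`1` (since `|x n| ^ q ≤ |x n| ^ 2 * ‖x‖₂ ^ (q - 2)`); sublinearity, continuity, the bound by `‖·‖₂`
and the zero set follow. The indicator of `N` coordinates has `ℓ₂`-norm `N ^ (1/2)` but `ℓ_q`-norm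
`N ^ (1/q)`, and the ratio tends to `0`, so no `α > 0` bounds `lqNorm q` from below.
-/

open Filter Topology
open scoped ENNReal

theorem Real.not_forall_mul_natCast_rpow_le {a b c : ℝ} (hba : b < a) (hc : 0 < c) :
    ¬ ∀ n : ℕ, c * (n : ℝ) ^ a ≤ (n : ℝ) ^ b := by
  have hlim : Tendsto (fun n : ℕ => (n : ℝ) ^ (b - a)) atTop (𝓝 0) := by
    simpa only [neg_sub, Function.comp_def] using
      (tendsto_rpow_neg_atTop (sub_pos.2 hba)).comp tendsto_natCast_atTop_atTop
  obtain ⟨n, hn_small, hn_pos⟩ :=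
    ((hlim.eventually (gt_mem_nhds hc)).and (eventually_gt_atTop 0)).exists
  intro h
  have hn : (0 : ℝ) < n := Nat.cast_pos.2 hn_pos
  have hc_le : c ≤ (n : ℝ) ^ (b - a) := by
    rw [Real.rpow_sub hn, le_div_iff₀ (Real.rpow_pos_of_pos hn a)]
    exact h n
  linarith

namespace lp

variable {𝕜 α : Type*} {E : α → Type*} [∀ i, NormedAddCommGroup (E i)] [NormedRing 𝕜]
  [∀ i, Module 𝕜 (E i)] [∀ i, IsBoundedSMul 𝕜 (E i)] {p r : ℝ≥0∞}

theorem linearMapOfLE_injective (hpr : p ≤ r) : Function.Injective (linearMapOfLE 𝕜 E hpr) :=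
  fun f g h => lp.ext (by simpa using congrArg (⇑) h)

theorem linearMapOfLE_single [DecidableEq α] (hpr : p ≤ r) (i : α) (x : E i) :
    linearMapOfLE 𝕜 E hpr (lp.single p i x) = lp.single r i x :=
  rfl

theorem norm_linearMapOfLE_le (hp : p ≠ 0) (hpr : p ≤ r) (f : lp E p) :
    ‖linearMapOfLE 𝕜 E hpr f‖ ≤ ‖f‖ := by
  rcases eq_or_ne r ∞ with rfl | hr
  · exact norm_le_of_forall_le (norm_nonneg' f) fun i => norm_apply_le_norm hp f i
  have hp' : 0 < p.toReal := ENNReal.toReal_pos hp (ne_top_of_le_ne_top hr hpr)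
  have hpr' : p.toReal ≤ r.toReal := ENNReal.toReal_mono hr hpr
  have hsplit : ∀ t : ℝ, 0 ≤ t → t ^ r.toReal = t ^ p.toReal * t ^ (r.toReal - p.toReal) :=
    fun t ht => by rw [← Real.rpow_add_of_nonneg ht hp'.le (sub_nonneg.2 hpr'), add_sub_cancel]
  have hle : ∀ i, ‖f i‖ ^ r.toReal ≤ ‖f i‖ ^ p.toReal * ‖f‖ ^ (r.toReal - p.toReal) := by
    intro i
    rw [hsplit _ (norm_nonneg _)]
    gcongr
    exact norm_apply_le_norm hp f i
  have hsum : Summable fun i => ‖f i‖ ^ p.toReal * ‖f‖ ^ (r.toReal - p.toReal) :=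
    ((lp.memℓp f).summable hp').mul_right _
  refine norm_le_of_tsum_le (hp'.trans_le hpr') (norm_nonneg' f) ?_
  calc ∑' i, ‖f i‖ ^ r.toReal
      ≤ ∑' i, ‖f i‖ ^ p.toReal * ‖f‖ ^ (r.toReal - p.toReal) :=
        (hsum.of_nonneg_of_le (fun i => by positivity) hle).tsum_le_tsum hle hsum
    _ = ‖f‖ ^ r.toReal := by
        rw [tsum_mul_right, ← norm_rpow_eq_tsum hp', ← hsplit _ (norm_nonneg' f)]

theorem norm_sum_single_const {F : Type*} [NormedAddCommGroup F] [DecidableEq α]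
    (hp : 0 < p.toReal) (s : Finset α) (x : F) :
    ‖∑ i ∈ s, lp.single (E := fun _ => F) p i x‖ = (s.card : ℝ) ^ (1 / p.toReal) * ‖x‖ := by
  have h := lp.norm_sum_single hp (fun _ => x) s
  rw [Finset.sum_const, nsmul_eq_mul] at h
  rw [← Real.rpow_rpow_inv (norm_nonneg' _) hp.ne', h,
    Real.mul_rpow (by positivity) (by positivity), Real.rpow_rpow_inv (norm_nonneg x) hp.ne',
    one_div]

theorem not_exists_mul_norm_le_norm_linearMapOfLE [Infinite α] (hp : 0 < p.toReal) (hr : r ≠ ∞)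
    (hpr : p < r) :
    ¬ ∃ c : ℝ, 0 < c ∧ ∀ f : lp (fun _ : α => ℝ) p, c * ‖f‖ ≤ ‖linearMapOfLE ℝ _ hpr.le f‖ := by
  classical
  rintro ⟨c, hc, hf⟩
  have hpr' : p.toReal < r.toReal := ENNReal.toReal_strict_mono hr hpr
  refine Real.not_forall_mul_natCast_rpow_le (one_div_lt_one_div_of_lt hp hpr') hc fun n => ?_
  obtain ⟨s, hs⟩ := Infinite.exists_subset_card_eq α n
  have hs_bound := hf (∑ i ∈ s, lp.single p i 1)
  rwa [map_sum, Finset.sum_congr rfl fun i _ => linearMapOfLE_single hpr.le i 1,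
    norm_sum_single_const hp, norm_sum_single_const (hp.trans hpr'), hs, norm_one, mul_one,
    mul_one] at hs_bound

end lp

theorem lqNorm_eq_norm_linearMapOfLE {q : ℝ} (hq : 0 < q) (h : 2 ≤ ENNReal.ofReal q)
    (x : lp (fun _ : ℕ => ℝ) 2) : lqNorm q x = ‖lp.linearMapOfLE ℝ _ h x‖ := by
  rw [lp.norm_eq_tsum_rpow (by rwa [ENNReal.toReal_ofReal hq.le]), ENNReal.toReal_ofReal hq.le]
  rfl

theorem stmt11 (q : ℝ) (hq : 2 < q) :
    Continuous (lqNorm q) ∧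
    lqNorm q 0 = 0 ∧
    (∀ (x : lp (fun _ : ℕ => ℝ) 2) (t : ℝ), 0 < t → lqNorm q (t • x) = t * lqNorm q x) ∧
    (∀ x y : lp (fun _ : ℕ => ℝ) 2, lqNorm q (x + y) ≤ lqNorm q x + lqNorm q y) ∧
    (∀ x : lp (fun _ : ℕ => ℝ) 2, lqNorm q x ≤ ‖x‖) ∧
    {x : lp (fun _ : ℕ => ℝ) 2 | lqNorm q x ≤ 0} = {0} ∧
    ¬ ∃ α : ℝ, 0 < α ∧ ∀ x : lp (fun _ : ℕ => ℝ) 2, α * ‖x‖ ≤ lqNorm q x := by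
  have hq0 : 0 < q := by linarith
  have h2q : 2 < ENNReal.ofReal q := by simpa using (ENNReal.ofReal_lt_ofReal_iff hq0).2 hq
  have : Fact (1 ≤ ENNReal.ofReal q) := ⟨one_le_two.trans h2q.le⟩
  set ι := lp.linearMapOfLE ℝ (fun _ : ℕ => ℝ) h2q.le
  have hbound : ∀ x, ‖ι x‖ ≤ ‖x‖ := lp.norm_linearMapOfLE_le two_ne_zero h2q.le
  simp only [show lqNorm q = fun x => ‖ι x‖ from funext (lqNorm_eq_norm_linearMapOfLE hq0 h2q.le)]
  refine ⟨continuous_norm.comp (AddMonoidHomClass.continuous_of_bound ι 1 (by simpa using hbound)),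
    by simp, fun x t ht => ?_, fun x y => ?_, hbound, ?_,
    lp.not_exists_mul_norm_le_norm_linearMapOfLE (by simp) ENNReal.ofReal_ne_top h2q⟩
  · rw [map_smul, norm_smul, Real.norm_of_nonneg ht.le]
  · rw [map_add]
    exact norm_add_le _ _
  · ext x
    simp [map_eq_zero_iff ι (lp.linearMapOfLE_injective h2q.le)]
end
end

section
/- Let X be a real separated locally convex space and f ∈ Γ(X). Then: (a) f is directionally coercive if and only if 0 ∈ qi cl(dom f*) (closure and quasi-interior taken in X* with the weak* topology); (b) f is essentially directionally coercive if and only if qi cl(dom f*) ≠ ∅. -/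
open Filter Topology Set Pointwise TopologicalSpace

noncomputable section

/-!
A continuous linear functional on the weak* dual is the evaluation at a point `u` of `X`, so by
Hahn–Banach `x* ∈ qi (cl (dom f*))` fails exactly when some `u ≠ 0` has `⟨u, y*⟩ ≤ ⟨u, x*⟩` for all
`y* ∈ dom f*`. Such `u` are exactly the directions along which `f - x*` does not tend to `+∞`.
Indeed `f` is the supremum of its affine minorants, whose slopes lie in `dom f*`, so `f - x*` is
nonincreasing along such a `u`. Conversely, if `f - x*` is bounded on a ray then, by convexity, it is
bounded on a half-line, and every affine minorant of `f` must then have slope `y*` with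
`⟨u, y*⟩ ≤ ⟨u, x*⟩`. Part (a) is the case `x* = 0`.
-/

theorem Convex.coneGen {F : Type*} [AddCommGroup F] [Module ℝ F] {A : Set F} (hA : Convex ℝ A) (a : F) : Convex ℝ (coneGen A a) := by
  rintro _ ⟨t₁, ht₁, b₁, hb₁, rfl⟩ _ ⟨t₂, ht₂, b₂, hb₂, rfl⟩ p q hp hq hpq
  rcases (add_nonneg (mul_nonneg hp ht₁) (mul_nonneg hq ht₂)).eq_or_lt with hσ | hσ
  · have h₁ : p * t₁ = 0 := by nlinarith [mul_nonneg hp ht₁, mul_nonneg hq ht₂]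
    have h₂ : q * t₂ = 0 := by nlinarith [mul_nonneg hp ht₁, mul_nonneg hq ht₂]
    exact ⟨0, le_rfl, b₁, hb₁, by simp [smul_smul, h₁, h₂]⟩
  · refine ⟨p * t₁ + q * t₂, hσ.le,
      (p * t₁ / (p * t₁ + q * t₂)) • b₁ + (q * t₂ / (p * t₁ + q * t₂)) • b₂,
      hA hb₁ hb₂ (by positivity) (by positivity) (by field_simp), ?_⟩
    have e₁ : (p * t₁ + q * t₂) • ((p * t₁ / (p * t₁ + q * t₂)) • b₁) = (p * t₁) • b₁ := by
      rw [smul_smul, mul_div_cancel₀ _ hσ.ne']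
    have e₂ : (p * t₁ + q * t₂) • ((q * t₂ / (p * t₁ + q * t₂)) • b₂) = (q * t₂) • b₂ := by
      rw [smul_smul, mul_div_cancel₀ _ hσ.ne']
    rw [smul_sub (p * t₁ + q * t₂), smul_add, e₁, e₂]
    module

namespace WeakDual

variable {X : Type*} [AddCommGroup X] [Module ℝ X] [TopologicalSpace X]

instance : LocallyConvexSpace ℝ (WeakDual ℝ X) := WeakBilin.locallyConvexSpace

theorem exists_eval_separation {K : Set (WeakDual ℝ X)} (hK : Convex ℝ K) (hKc : IsClosed K)
    {z : WeakDual ℝ X} (hz : z ∉ K) : ∃ (u : X) (s : ℝ), z u < s ∧ ∀ k ∈ K, s < k u := by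
  obtain ⟨φ, s, hφz, hφK⟩ := geometric_hahn_banach_point_closed hK hKc hz
  obtain ⟨u, rfl⟩ := LinearMap.dualEmbedding_surjective (topDualPairing ℝ X) φ
  exact ⟨u, s, hφz, hφK⟩

variable [SeparatingDual ℝ X]

theorem mem_qi_closure_iff {D : Set (WeakDual ℝ X)} (hD : Convex ℝ D) (hDne : D.Nonempty)
    (xs : WeakDual ℝ X) :
    xs ∈ qi (closure D) ↔ ∀ u : X, u ≠ 0 → ∃ ys ∈ D, xs u < ys u := by
  constructor
  · rintro ⟨-, hcone⟩ u hu
    by_contra! hle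
    have hDH : closure D ⊆ {ys | ys u ≤ xs u} :=
      closure_minimal hle (isClosed_le (WeakDual.eval_continuous u) continuous_const)
    have hconeH : closure (coneGen (closure D) xs) ⊆ {w | w u ≤ 0} := by
      refine closure_minimal ?_ (isClosed_le (WeakDual.eval_continuous u) continuous_const)
      rintro _ ⟨t, ht, b, hb, rfl⟩
      exact mul_nonpos_of_nonneg_of_nonpos ht (sub_nonpos.2 (hDH hb))
    rw [hcone] at hconeH
    obtain ⟨g, hg⟩ := SeparatingDual.exists_ne_zero (R := ℝ) hu
    have h₁ : (show WeakDual ℝ X from g) u ≤ 0 := hconeH (mem_univ _)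
    have h₂ : (-show WeakDual ℝ X from g) u ≤ 0 := hconeH (mem_univ _)
    exact hg (le_antisymm h₁ (neg_nonpos.1 h₂))
  · intro hpos
    have hxs : xs ∈ closure D := by
      by_contra hxs
      obtain ⟨u, s, hxsu, hDu⟩ := exists_eval_separation hD.closure isClosed_closure hxs
      rcases eq_or_ne u 0 with rfl | hu
      · obtain ⟨y, hy⟩ := hDne
        linarith [hDu y (subset_closure hy), map_zero xs, map_zero y]
      obtain ⟨ys, hys, hlt⟩ := hpos (-u) (neg_ne_zero.2 hu)
      simp only [map_neg] at hlt
      linarith [hDu ys (subset_closure hys)]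
    refine ⟨hxs, eq_univ_of_forall fun z => ?_⟩
    by_contra hz
    obtain ⟨u, s, hzu, hCu⟩ :=
      exists_eval_separation ((hD.closure.coneGen xs).closure) isClosed_closure hz
    have hs : s < 0 := hCu 0 (subset_closure ⟨0, le_rfl, xs, hxs, by simp⟩)
    have hu : u ≠ 0 := by
      rintro rfl
      linarith [map_zero z]
    obtain ⟨ys, hys, hlt⟩ := hpos (-u) (neg_ne_zero.2 hu)
    simp only [map_neg, neg_lt_neg_iff] at hlt
    set t := (s - 1) / (ys u - xs u)
    have ht : 0 ≤ t := div_nonneg_of_nonpos (by linarith) (by linarith)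
    have hmem := hCu _ (subset_closure ⟨t, ht, ys, subset_closure hys, rfl⟩)
    have : (t • (ys - xs)) u = s - 1 := by
      change t * (ys u - xs u) = s - 1
      exact div_mul_cancel₀ _ (by linarith)
    linarith

end WeakDual

theorem EReal.coe_sub_le_iff_coe_sub_le {a b : ℝ} {c : EReal} :
    ((a - b : ℝ) : EReal) ≤ c ↔ (a : EReal) - c ≤ b := by
  induction c using EReal.rec with
  | bot => simp [-EReal.coe_sub]
  | top => simp
  | coe c => norm_cast; constructor <;> intro h <;> linarith

theorem le_of_forall_ge_add_mul_le {a b p q t₁ : ℝ} (h : ∀ t ≥ t₁, a + t * p ≤ b + t * q) :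
    p ≤ q := by
  by_contra! hqp
  have hT := le_max_right t₁ ((b - a + 1) / (p - q))
  rw [div_le_iff₀ (sub_pos.2 hqp)] at hT
  nlinarith [h _ (le_max_left t₁ ((b - a + 1) / (p - q)))]

theorem convex_setOf_le_affine_on_line {X : Type*} [AddCommGroup X] [Module ℝ X] {f : X → EReal}
    (hconv : Convex ℝ {p : X × ℝ | f p.1 ≤ p.2})
    (x u : X) (α γ : ℝ) : Convex ℝ {t : ℝ | f (x + t • u) ≤ ((α + t * γ : ℝ) : EReal)} := by
  have hline : {t : ℝ | f (x + t • u) ≤ ((α + t * γ : ℝ) : EReal)} =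
      AffineMap.lineMap ((x, α) : X × ℝ) (x + u, α + γ) ⁻¹' {p : X × ℝ | f p.1 ≤ p.2} := by
    ext t
    simp [AffineMap.lineMap_apply, add_comm]
  rw [hline]
  exact hconv.affine_preimage _

section Epigraph

variable {X : Type*} [AddCommGroup X] [Module ℝ X] [TopologicalSpace X] {f : X → EReal}

theorem mem_domConj_iff (hf : ∃ x, f x ≠ ⊤) {xs : WeakDual ℝ X} :
    xs ∈ domConj f ↔ ∃ β : ℝ, ∀ y, ((xs y - β : ℝ) : EReal) ≤ f y := by
  simp_rw [EReal.coe_sub_le_iff_coe_sub_le]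
  constructor
  · intro hxs
    obtain ⟨x₁, hx₁⟩ := hf
    have hbot : conjFn f xs ≠ ⊥ := by
      refine ne_bot_of_le_ne_bot ?_ (le_iSup (fun x => (xs x : EReal) - f x) x₁)
      generalize f x₁ = a at hx₁ ⊢
      induction a using EReal.rec <;> simp_all [← EReal.coe_sub]
    lift conjFn f xs to ℝ using ⟨hxs, hbot⟩ with β hβ
    exact ⟨β, fun y => hβ ▸ le_iSup (fun x => (xs x : EReal) - f x) y⟩
  · rintro ⟨β, hβ⟩
    exact ne_top_of_le_ne_top (EReal.coe_ne_top β) (iSup_le hβ)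

theorem convex_domConj (hf : ∃ x, f x ≠ ⊤) : Convex ℝ (domConj f) := by
  intro xs hxs ys hys p q hp hq hpq
  obtain ⟨β₁, hβ₁⟩ := (mem_domConj_iff hf).1 hxs
  obtain ⟨β₂, hβ₂⟩ := (mem_domConj_iff hf).1 hys
  refine (mem_domConj_iff hf).2 ⟨p * β₁ + q * β₂, fun y => ?_⟩
  have h₁ := hβ₁ y
  have h₂ := hβ₂ y
  generalize f y = a at h₁ h₂ ⊢
  induction a using EReal.rec with
  | bot => exact absurd (le_bot_iff.1 h₁) (EReal.coe_ne_bot _)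
  | top => exact le_top
  | coe r =>
    norm_cast at h₁ h₂ ⊢
    change p * xs y + q * ys y - (p * β₁ + q * β₂) ≤ r
    have hr : r = p * r + q * r := by rw [← add_mul, hpq, one_mul]
    nlinarith [mul_le_mul_of_nonneg_left h₁ hp, mul_le_mul_of_nonneg_left h₂ hq]

end Epigraph

theorem exists_affine_minorant_of_separation {X : Type*} [AddCommGroup X] [Module ℝ X]
    [TopologicalSpace X] {f : X → EReal} {φ : StrongDual ℝ X} {c s : ℝ} (hc : 0 < c)
    (hsep : ∀ y (r : ℝ), f y ≤ r → s < φ y + r * c) {z : X} {b : ℝ} (hz : φ z + b * c < s) :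
    ∃ (xs : WeakDual ℝ X) (β : ℝ), (∀ y, ((xs y - β : ℝ) : EReal) ≤ f y) ∧ b < xs z - β := by
  have hxs : ∀ y, (StrongDual.toWeakDual (-c⁻¹ • φ)) y - -(s / c) = (s - φ y) / c := by
    intro y
    change -c⁻¹ * φ y - -(s / c) = (s - φ y) / c
    field_simp
    ring
  refine ⟨StrongDual.toWeakDual (-c⁻¹ • φ), -(s / c), fun y => ?_, ?_⟩
  · by_contra! hy
    have := hsep y _ hy.le
    rw [hxs, div_mul_cancel₀ _ hc.ne'] at this
    linarith
  · rw [hxs, lt_div_iff₀ hc]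
    linarith

namespace GammaFn

variable {X : Type*} [AddCommGroup X] [Module ℝ X] [TopologicalSpace X] {f : X → EReal}

theorem exists_eq_coe (hf : GammaFn f) : ∃ (x : X) (r : ℝ), f x = r := by
  obtain ⟨x, hx⟩ := hf.1
  exact ⟨x, (f x).toReal, (EReal.coe_toReal hx (hf.2.1 x)).symm⟩

theorem isClosed_epigraph (hf : GammaFn f) : IsClosed {p : X × ℝ | f p.1 ≤ p.2} :=
  hf.2.2.2.isClosed_epigraph.preimage
    (continuous_fst.prodMk (continuous_coe_real_ereal.comp continuous_snd))

theorem eval_le_of_frequently_sub_le (hf : GammaFn f) {xs ys : WeakDual ℝ X} {x u : X} {M : ℝ}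
    (hys : ys ∈ domConj f) (hM : ∃ᶠ t : ℝ in atTop, f (x + t • u) - xs (x + t • u) ≤ M) :
    ys u ≤ xs u := by
  set S := {t : ℝ | f (x + t • u) ≤ ((M + xs x + t * xs u : ℝ) : EReal)}
  have hS : ∃ᶠ t in atTop, t ∈ S := by
    refine hM.mono fun t ht => ?_
    rw [EReal.sub_le_iff_le_add (.inl (EReal.coe_ne_bot _)) (.inl (EReal.coe_ne_top _)),
      map_add, map_smul, smul_eq_mul] at ht
    show f _ ≤ _
    rwa [add_assoc, EReal.coe_add]
  have hSconn := (convex_setOf_le_affine_on_line hf.2.2.1 x u (M + xs x) (xs u)).ordConnected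
  obtain ⟨t₁, ht₁⟩ := hS.exists
  obtain ⟨β, hβ⟩ := (mem_domConj_iff hf.1).1 hys
  refine le_of_forall_ge_add_mul_le (a := ys x - β) (b := M + xs x) (t₁ := t₁) fun t ht => ?_
  obtain ⟨t₂, ht₂, htt₂⟩ := (hS.and_eventually (eventually_ge_atTop t)).exists
  have hbound := (hβ (x + t • u)).trans (hSconn.out ht₁ ht₂ ⟨ht, htt₂⟩)
  rw [map_add, map_smul, smul_eq_mul] at hbound
  norm_cast at hbound
  linarith

variable [IsTopologicalAddGroup X] [ContinuousSMul ℝ X] [LocallyConvexSpace ℝ X]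

theorem exists_separation_epigraph (hf : GammaFn f) {z : X} {b : ℝ} (hb : (b : EReal) < f z) :
    ∃ (φ : StrongDual ℝ X) (c s : ℝ), 0 ≤ c ∧ φ z + b * c < s ∧
      ∀ y (r : ℝ), f y ≤ r → s < φ y + r * c := by
  obtain ⟨Φ, s, hz, hepi⟩ :=
    geometric_hahn_banach_point_closed hf.2.2.1 hf.isClosed_epigraph
      (show (z, b) ∉ {p : X × ℝ | f p.1 ≤ p.2} from not_le.2 hb)
  have hΦ : ∀ y r, Φ (y, r) = Φ.comp (.inl ℝ X ℝ) y + r * Φ (0, 1) := by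
    intro y r
    rw [ContinuousLinearMap.comp_apply, ContinuousLinearMap.inl_apply, ← smul_eq_mul, ← map_smul,
      ← map_add, Prod.smul_mk, smul_zero, smul_eq_mul, mul_one, Prod.mk_add_mk, add_zero, zero_add]
  refine ⟨Φ.comp (.inl ℝ X ℝ), Φ (0, 1), s, ?_, by rwa [← hΦ], fun y r hy => by
    rw [← hΦ]; exact hepi (y, r) hy⟩
  obtain ⟨x, r, hr⟩ := hf.exists_eq_coe
  by_contra! hc
  -- the epigraph is stable under upward shifts, along which `Φ` would reach the level `s`
  have hn : 0 ≤ (Φ (x, r) - s) / -Φ (0, 1) :=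
    div_nonneg (sub_nonneg.2 (hepi (x, r) hr.le).le) (neg_nonneg.2 hc.le)
  have hshift := hepi (x, r + (Φ (x, r) - s) / -Φ (0, 1))
    (show f x ≤ _ by rw [hr]; exact_mod_cast le_add_of_nonneg_right hn)
  rw [hΦ, add_mul, div_mul_eq_mul_div, div_neg, mul_div_cancel_right₀ _ hc.ne, ← add_assoc,
    ← hΦ] at hshift
  linarith

theorem exists_affine_minorant (hf : GammaFn f) :
    ∃ (xs : WeakDual ℝ X) (β : ℝ), ∀ y, ((xs y - β : ℝ) : EReal) ≤ f y := by
  obtain ⟨x, r, hr⟩ := hf.exists_eq_coe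
  obtain ⟨φ, c, s, -, hlt, hsep⟩ := hf.exists_separation_epigraph (z := x) (b := r - 1)
    (by rw [hr]; exact_mod_cast sub_one_lt r)
  have hc : 0 < c := by linarith [hsep x r hr.le]
  obtain ⟨xs, β, hxs, -⟩ := exists_affine_minorant_of_separation hc hsep hlt
  exact ⟨xs, β, hxs⟩

theorem exists_affine_minorant_gt (hf : GammaFn f) {z : X} {b : ℝ} (hb : (b : EReal) < f z) :
    ∃ (xs : WeakDual ℝ X) (β : ℝ), (∀ y, ((xs y - β : ℝ) : EReal) ≤ f y) ∧ b < xs z - β := by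
  obtain ⟨φ, c, s, hc, hz, hsep⟩ := hf.exists_separation_epigraph hb
  rcases hc.lt_or_eq with hc | rfl
  · exact exists_affine_minorant_of_separation hc hsep hz
  -- `z ∉ cl (dom f)`: tilt an affine minorant along `-φ`, which is nonpositive on `dom f`
  simp only [mul_zero, add_zero] at hz hsep
  obtain ⟨xs₀, β₀, h₀⟩ := hf.exists_affine_minorant
  set l := (|b - (xs₀ z - β₀)| + 1) / (s - φ z)
  have hl : l * (s - φ z) = |b - (xs₀ z - β₀)| + 1 := div_mul_cancel₀ _ (by linarith)
  have hl₀ : 0 ≤ l := div_nonneg (by positivity) (by linarith)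
  have hxs : ∀ y, (xs₀ - l • StrongDual.toWeakDual φ) y - (β₀ - l * s) =
      xs₀ y - β₀ + l * (s - φ y) := fun y => by
    change xs₀ y - l * φ y - (β₀ - l * s) = _
    ring
  refine ⟨xs₀ - l • StrongDual.toWeakDual φ, β₀ - l * s, fun y => ?_, ?_⟩
  · rcases eq_or_ne (f y) ⊤ with hy | hy
    · exact hy ▸ le_top
    have hφy : s < φ y := hsep y _ (EReal.le_coe_toReal hy)
    refine le_trans ?_ (h₀ y)
    rw [hxs]
    exact_mod_cast add_le_of_nonpos_right (mul_nonpos_of_nonneg_of_nonpos hl₀ (by linarith))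
  · rw [hxs, hl]
    linarith [le_abs_self (b - (xs₀ z - β₀))]

theorem domConj_nonempty (hf : GammaFn f) : (domConj f).Nonempty :=
  let ⟨xs, β, h⟩ := hf.exists_affine_minorant
  ⟨xs, (mem_domConj_iff hf.1).2 ⟨β, h⟩⟩

theorem sub_eval_le_of_forall_eval_le (hf : GammaFn f) {xs : WeakDual ℝ X} {u : X}
    (hu : ∀ ys ∈ domConj f, ys u ≤ xs u) (x : X) {t : ℝ} (ht : 0 ≤ t) :
    f (x + t • u) - xs (x + t • u) ≤ f x - xs x := by
  by_contra! hlt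
  have hx : f x ≠ ⊤ := by
    intro h
    rw [h, EReal.top_sub_coe] at hlt
    exact not_top_lt hlt
  obtain ⟨r, hr⟩ : ∃ r : ℝ, f x = r := ⟨(f x).toReal, (EReal.coe_toReal hx (hf.2.1 x)).symm⟩
  have hb : ((r + t * xs u : ℝ) : EReal) < f (x + t • u) := by
    rw [hr, ← EReal.coe_sub, EReal.lt_sub_iff_add_lt (.inl (EReal.coe_ne_bot _))
      (.inl (EReal.coe_ne_top _))] at hlt
    convert hlt using 1
    rw [map_add, map_smul, smul_eq_mul]
    norm_cast
    ring
  obtain ⟨ys, β, hys, hgt⟩ := hf.exists_affine_minorant_gt hb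
  have hyu := hu ys ((mem_domConj_iff hf.1).2 ⟨β, hys⟩)
  have hyx := hys x
  rw [hr] at hyx
  norm_cast at hyx
  rw [map_add, map_smul, smul_eq_mul] at hgt
  nlinarith [mul_le_mul_of_nonneg_left hyu ht]

theorem dirCoercive_sub_iff (hf : GammaFn f) (xs : WeakDual ℝ X) :
    DirCoercive (fun x => f x - xs x) ↔ ∀ u : X, u ≠ 0 → ∃ ys ∈ domConj f, xs u < ys u := by
  constructor
  · intro hdc u hu
    by_contra! hle
    obtain ⟨x, r, hr⟩ := hf.exists_eq_coe
    have hfin : f x - xs x < ⊤ := by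
      rw [hr, ← EReal.coe_sub]
      exact EReal.coe_lt_top _
    obtain ⟨t, hlt, ht⟩ :=
      (((hdc x u hu).eventually (eventually_gt_nhds hfin)).and (eventually_ge_atTop 0)).exists
    exact (hf.sub_eval_le_of_forall_eval_le hle x ht).not_gt hlt
  · intro h x u hu
    rw [EReal.tendsto_nhds_top_iff_real]
    intro M
    by_contra hM
    simp only [not_eventually, not_lt] at hM
    obtain ⟨ys, hys, hlt⟩ := h u hu
    exact hlt.not_ge (hf.eval_le_of_frequently_sub_le hys hM)

theorem dirCoercive_sub_iff_mem_qi [T2Space X] (hf : GammaFn f) (xs : WeakDual ℝ X) :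
    DirCoercive (fun x => f x - xs x) ↔ xs ∈ qi (closure (domConj f)) :=
  (hf.dirCoercive_sub_iff xs).trans
    (WeakDual.mem_qi_closure_iff (convex_domConj hf.1) hf.domConj_nonempty xs).symm

end GammaFn

variable {X : Type*}

theorem stmt12 [AddCommGroup X] [Module ℝ X] [TopologicalSpace X] [IsTopologicalAddGroup X]
    [ContinuousSMul ℝ X] [LocallyConvexSpace ℝ X] [T2Space X]
    (f : X → EReal) (hf : GammaFn f) :
    (DirCoercive f ↔ (0 : WeakDual ℝ X) ∈ qi (closure (domConj f))) ∧
    ((∃ xs : WeakDual ℝ X, DirCoercive (fun x => f x - (xs x : EReal))) ↔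
      (qi (closure (domConj f))).Nonempty) := by
  refine ⟨?_, exists_congr hf.dirCoercive_sub_iff_mem_qi⟩
  simpa [show ∀ x, (0 : WeakDual ℝ X) x = 0 from fun _ => rfl]
    using hf.dirCoercive_sub_iff_mem_qi 0
end
end
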